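/- Let m ≥ 1, let a, b be tuples of reals of lengths i, j with 2m·a_s not a nonnegative integer for each entry, let a', b' be tuples of reals of lengths i', j' with m·a'_s not a nonnegative integer for each entry, and let c ≠ 0. Suppose that, as formal power series in x, F_{j,i}(−2m b; −2m a; x) · F_{j,i}(−2m b; −2m a; −x) = F_{j',i'}(−m b'; −m a'; c x²). Then Sym(H_{2m}[b; a]) = Dil_s H^E_m[b', 1−1/(2m); a'], where s is any complex number with s² = 4 c (−1)^{i'+j'+1}. -/

import Mathlib

open Polynomial Finset

noncomputable section

namespace FFP

/-- Coefficient `e_k(p)` defined by `p(x) = Σ (-1)^k e_k(p) x^(n-k)`. -/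
def eC (n k : ℕ) (p : Polynomial ℂ) : ℂ := (-1) ^ k * p.coeff (n - k)

/-- Falling factorial `x(x-1)⋯(x-k+1)`. -/
def ffa (x : ℂ) (k : ℕ) : ℂ := ∏ i ∈ Finset.range k, (x - i)

/-- Rising factorial `x(x+1)⋯(x+k-1)`. -/
def rfa (x : ℂ) (k : ℕ) : ℂ := ∏ i ∈ Finset.range k, (x + i)

/-- Monic polynomial of degree `n` from prescribed `e_k` coefficients. -/
def ofE (n : ℕ) (f : ℕ → ℂ) : Polynomial ℂ :=
  ∑ k ∈ Finset.range (n + 1), Polynomial.C ((-1) ^ k * f k) * Polynomial.X ^ (n - k)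

/-- Finite free additive convolution. -/
def boxplus (n : ℕ) (p q : Polynomial ℂ) : Polynomial ℂ :=
  ofE n fun k => ffa (n : ℂ) k * ∑ ij ∈ Finset.HasAntidiagonal.antidiagonal k,
    eC n ij.1 p * eC n ij.2 q / (ffa (n : ℂ) ij.1 * ffa (n : ℂ) ij.2)

/-- Finite free multiplicative convolution. -/
def boxtimes (n : ℕ) (p q : Polynomial ℂ) : Polynomial ℂ :=
  ofE n fun k => eC n k p * eC n k q / (n.choose k : ℂ)

/-- Dilation: `(dil n α p)(x) = α^n p(x/α)` for polynomials of degree ≤ n. -/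
def dil (n : ℕ) (α : ℂ) (p : Polynomial ℂ) : Polynomial ℂ :=
  ∑ j ∈ Finset.range (n + 1), Polynomial.C (α ^ (n - j) * p.coeff j) * Polynomial.X ^ j

/-- Symmetrization. -/
def sym (n : ℕ) (p : Polynomial ℂ) : Polynomial ℂ := boxplus n p (dil n (-1) p)

/-- Degree halving operation. -/
def Qm (m : ℕ) (p : Polynomial ℂ) : Polynomial ℂ :=
  ofE m fun k => (-1) ^ k * eC (2 * m) (2 * k) p

/-- Degree doubling operation. -/
def Sm (p : Polynomial ℂ) : Polynomial ℂ := p.comp (Polynomial.X ^ 2)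

/-- Hypergeometric polynomial `H_n[b; a]`. -/
def hyp (n : ℕ) {j i : ℕ} (b : Fin j → ℝ) (a : Fin i → ℝ) : Polynomial ℂ :=
  ofE n fun k =>
    (n.choose k : ℂ) * (∏ t, ffa ((n : ℂ) * (b t : ℂ)) k) / ∏ s, ffa ((n : ℂ) * (a s : ℂ)) k

/-- Even hypergeometric polynomial `H^E_m[b; a](x) = H_m[b; a](x²)`. -/
def hypE (m : ℕ) {j i : ℕ} (b : Fin j → ℝ) (a : Fin i → ℝ) : Polynomial ℂ :=
  (hyp m b a).comp (Polynomial.X ^ 2)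

/-- A monic polynomial of degree `2m` is even: all odd `e`-coefficients vanish. -/
def IsEvenP (m : ℕ) (p : Polynomial ℂ) : Prop :=
  ∀ k ≤ 2 * m, Odd k → eC (2 * m) k p = 0

/-- The generalized hypergeometric series `F_{j,i}(u; v; c·x^l)` as a formal power
series in `x`. -/
def hgSub {i j : ℕ} (u : Fin j → ℝ) (v : Fin i → ℝ) (c : ℝ) (l : ℕ) : PowerSeries ℂ :=
  PowerSeries.mk fun n =>
    if l ∣ n then
      (∏ t, rfa ((u t : ℂ)) (n / l)) /
          ((∏ s, rfa ((v s : ℂ)) (n / l)) * ((n / l).factorial : ℂ)) * (c : ℂ) ^ (n / l)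
    else 0


lemma ffa_succ (x : ℂ) (k : ℕ) : ffa x (k+1) = ffa x k * (x - k) := Finset.prod_range_succ _ _

lemma rfa_neg (x : ℂ) (k : ℕ) : rfa (-x) k = (-1)^k * ffa x k := by
  unfold rfa ffa
  induction k with
  | zero => simp
  | succ k ih =>
    rw [Finset.prod_range_succ, Finset.prod_range_succ, ih, pow_succ]
    ring

lemma prod_rfa_neg {ι : Type*} [Fintype ι] (x : ι → ℂ) (k : ℕ) :
    ∏ t, rfa (-(x t)) k = (-1)^(k * Fintype.card ι) * ∏ t, ffa (x t) k := by
  simp only [rfa_neg, Finset.prod_mul_distrib, Finset.prod_const, Finset.card_univ]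
  rw [← pow_mul]

lemma ffa_ne_zero {x : ℂ} (h : ∀ n : ℕ, x ≠ n) (k : ℕ) : ffa x k ≠ 0 := by
  unfold ffa
  rw [Finset.prod_ne_zero_iff]
  intro i _ h0
  exact h i (by linear_combination h0)

lemma ffa_natCast (n k : ℕ) (hk : k ≤ n) : ffa (n : ℂ) k = (n.choose k : ℂ) * (k.factorial : ℂ) := by
  induction k with
  | zero => simp [ffa]
  | succ k ih =>
    have hk' : k ≤ n := by omega
    rw [ffa_succ, ih hk']
    have h2 : (n.choose (k+1) : ℂ) * (k+1) = (n.choose k : ℂ) * ((n : ℂ) - k) := by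
      have h3 := congrArg (fun t : ℕ => (t : ℂ)) (Nat.choose_succ_right_eq n k)
      push_cast [Nat.cast_sub hk'] at h3
      simpa using h3
    rw [Nat.factorial_succ]
    push_cast
    linear_combination (-(k.factorial : ℂ)) * h2

lemma ffa_two_mul (m : ℂ) (r : ℕ) :
    ffa (2*m) (2*r) = 4^r * ffa m r * ffa (m - 1/2) r := by
  induction r with
  | zero => simp [ffa]
  | succ r ih =>
    have h : 2 * (r+1) = (2*r) + 1 + 1 := by ring
    rw [h, ffa_succ, ffa_succ, ih, ffa_succ, ffa_succ]
    push_cast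
    ring

lemma coeff_ofE (n : ℕ) (f : ℕ → ℂ) {k : ℕ} (hk : k ≤ n) :
    (ofE n f).coeff (n - k) = (-1)^k * f k := by
  unfold ofE
  rw [Polynomial.finset_sum_coeff, Finset.sum_eq_single k]
  · rw [Polynomial.coeff_C_mul, Polynomial.coeff_X_pow, if_pos rfl, mul_one]
  · intro k' hk' hne
    have hk'' : k' ≤ n := by have := Finset.mem_range.mp hk'; omega
    simp only [Polynomial.coeff_C_mul, Polynomial.coeff_X_pow]
    rw [if_neg (by omega), mul_zero]
  · intro h; exact absurd (Finset.mem_range.mpr (by omega)) h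

lemma eC_ofE (n : ℕ) (f : ℕ → ℂ) {k : ℕ} (hk : k ≤ n) : eC n k (ofE n f) = f k := by
  unfold eC
  rw [coeff_ofE n f hk, ← mul_assoc, ← mul_pow]
  norm_num

lemma ofE_congr {n : ℕ} {f g : ℕ → ℂ} (h : ∀ k ≤ n, f k = g k) : ofE n f = ofE n g := by
  unfold ofE
  exact Finset.sum_congr rfl fun k hk => by rw [h k (by have := Finset.mem_range.mp hk; omega)]

lemma coeff_dil (n : ℕ) (α : ℂ) (p : Polynomial ℂ) {u : ℕ} (hu : u ≤ n) :
    (dil n α p).coeff u = α ^ (n - u) * p.coeff u := by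
  unfold dil
  rw [Polynomial.finset_sum_coeff, Finset.sum_eq_single u]
  · rw [Polynomial.coeff_C_mul, Polynomial.coeff_X_pow, if_pos rfl, mul_one]
  · intro k' hk' hne
    simp only [Polynomial.coeff_C_mul, Polynomial.coeff_X_pow]
    rw [if_neg (by omega), mul_zero]
  · intro h; exact absurd (Finset.mem_range.mpr (by omega)) h

lemma eC_dil (n : ℕ) (α : ℂ) (p : Polynomial ℂ) {k : ℕ} (hk : k ≤ n) :
    eC n k (dil n α p) = α ^ k * eC n k p := by
  unfold eC
  rw [coeff_dil n α p (show n - k ≤ n by omega), show n - (n - k) = k by omega]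
  ring

lemma dil_eq_ofE (n : ℕ) (α : ℂ) (p : Polynomial ℂ) :
    dil n α p = ofE n (fun k => α ^ k * eC n k p) := by
  unfold dil ofE
  rw [← Finset.sum_range_reflect]
  apply Finset.sum_congr rfl
  intro k hk
  have hk' : k ≤ n := by have := Finset.mem_range.mp hk; omega
  rw [show n + 1 - 1 - k = n - k from by omega, show n - (n - k) = k from by omega]
  refine congrArg (· * Polynomial.X ^ (n - k)) (congrArg Polynomial.C ?_)
  unfold eC
  have h1 : ((-1:ℂ))^k * ((-1:ℂ))^k = 1 := by rw [← mul_pow]; norm_num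
  linear_combination (-(α ^ k * p.coeff (n - k))) * h1

lemma eC_comp_sq_even (m r : ℕ) (f : ℕ → ℂ) (hr : r ≤ m) :
    eC (2*m) (2*r) ((ofE m f).comp (X^2)) = (-1)^r * f r := by
  unfold eC ofE
  rw [Polynomial.sum_comp]
  simp only [Polynomial.mul_comp, Polynomial.C_comp, Polynomial.X_pow_comp, ← pow_mul]
  rw [Polynomial.finset_sum_coeff, Finset.sum_eq_single r]
  · rw [Polynomial.coeff_C_mul, Polynomial.coeff_X_pow, if_pos (by omega), pow_mul]
    norm_num
  · intro k' hk' hne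
    have hk'' : k' ≤ m := by have := Finset.mem_range.mp hk'; omega
    simp only [Polynomial.coeff_C_mul, Polynomial.coeff_X_pow]
    rw [if_neg (by omega), mul_zero]
  · intro h; exact absurd (Finset.mem_range.mpr (by omega)) h

lemma eC_comp_sq_odd (m k : ℕ) (f : ℕ → ℂ) (hk : Odd k) (hk2 : k ≤ 2*m) :
    eC (2*m) k ((ofE m f).comp (X^2)) = 0 := by
  obtain ⟨t, ht⟩ := hk
  unfold eC ofE
  rw [Polynomial.sum_comp]
  simp only [Polynomial.mul_comp, Polynomial.C_comp, Polynomial.X_pow_comp, ← pow_mul]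
  rw [Polynomial.finset_sum_coeff, Finset.sum_eq_zero, mul_zero]
  intro k' hk'
  have hk'' : k' ≤ m := by have := Finset.mem_range.mp hk'; omega
  simp only [Polynomial.coeff_C_mul, Polynomial.coeff_X_pow]
  rw [if_neg (by omega), mul_zero]

lemma eC_hyp_eq (m : ℕ) {i j : ℕ} (a : Fin i → ℝ) (b : Fin j → ℝ)
    (ha : ∀ s, ∀ k : ℕ, (2 * (m:ℝ)) * a s ≠ k) {w : ℕ} (hw : w ≤ 2*m) :
    eC (2*m) w (hyp (2*m) b a) =
      (-1)^(w*(i+j)) * (ffa ((2*m : ℕ) : ℂ) w *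
        ((∏ t, rfa (((-(2 * (m:ℝ)) * b t : ℝ) : ℂ)) w) /
          ((∏ s', rfa (((-(2 * (m:ℝ)) * a s' : ℝ) : ℂ)) w) * (w.factorial : ℂ)))) := by
  have hcb : ∀ t, (((-(2 * (m:ℝ)) * b t : ℝ) : ℂ)) = -(((2*m : ℕ) : ℂ) * (b t : ℂ)) := by
    intro t; push_cast; ring
  have hca : ∀ t, (((-(2 * (m:ℝ)) * a t : ℝ) : ℂ)) = -(((2*m : ℕ) : ℂ) * (a t : ℂ)) := by
    intro t; push_cast; ring
  simp only [hcb, hca]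
  rw [prod_rfa_neg (fun t => ((2*m : ℕ) : ℂ) * (b t : ℂ)) w,
    prod_rfa_neg (fun t => ((2*m : ℕ) : ℂ) * (a t : ℂ)) w,
    Fintype.card_fin, Fintype.card_fin]
  unfold hyp
  rw [eC_ofE _ _ hw]
  rw [ffa_natCast _ _ hw]
  have hPa : (∏ s', ffa (((2*m : ℕ) : ℂ) * (a s' : ℂ)) w) ≠ 0 := by
    rw [Finset.prod_ne_zero_iff]
    intro s' _
    apply ffa_ne_zero
    intro nn hnn
    apply ha s' nn
    have : (((2 * (m:ℝ)) * a s' : ℝ) : ℂ) = ((nn : ℝ) : ℂ) := by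
      push_cast at hnn ⊢; linear_combination hnn
    exact_mod_cast this
  have hfac : (w.factorial : ℂ) ≠ 0 := Nat.cast_ne_zero.mpr w.factorial_ne_zero
  rw [show w*(i+j) = w*i + w*j from by ring, pow_add]
  set Pb := ∏ t, ffa (((2*m : ℕ) : ℂ) * (b t : ℂ)) w with hPbdef
  set Pa := ∏ t, ffa (((2*m : ℕ) : ℂ) * (a t : ℂ)) w with hPadef
  rcases Nat.even_or_odd (w*i) with h1|h1 <;> rcases Nat.even_or_odd (w*j) with h2|h2 <;>
    simp only [h1.neg_one_pow, h2.neg_one_pow] <;> field_simp <;> ring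

lemma term_eq (m : ℕ) {i j : ℕ} (a : Fin i → ℝ) (b : Fin j → ℝ)
    (ha : ∀ s, ∀ k : ℕ, (2 * (m:ℝ)) * a s ≠ k) {u v : ℕ} (hu : u ≤ 2*m) (hv : v ≤ 2*m) :
    eC (2*m) u (hyp (2*m) b a) * eC (2*m) v (dil (2*m) (-1) (hyp (2*m) b a)) /
      (ffa ((2*m : ℕ) : ℂ) u * ffa ((2*m : ℕ) : ℂ) v) =
    (-1) ^ ((u + v) * (i + j)) *
      (((∏ t, rfa (((-(2 * (m:ℝ)) * b t : ℝ) : ℂ)) u) /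
          ((∏ s', rfa (((-(2 * (m:ℝ)) * a s' : ℝ) : ℂ)) u) * (u.factorial : ℂ))) *
        (((∏ t, rfa (((-(2 * (m:ℝ)) * b t : ℝ) : ℂ)) v) /
            ((∏ s', rfa (((-(2 * (m:ℝ)) * a s' : ℝ) : ℂ)) v) * (v.factorial : ℂ))) *
          (-1) ^ v)) := by
  rw [eC_dil _ _ _ hv, eC_hyp_eq m a b ha hu, eC_hyp_eq m a b ha hv]
  have hFu : ffa ((2*m : ℕ) : ℂ) u ≠ 0 := by
    rw [ffa_natCast _ _ hu]
    exact mul_ne_zero (Nat.cast_ne_zero.mpr (Nat.choose_pos hu).ne')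
      (Nat.cast_ne_zero.mpr u.factorial_ne_zero)
  have hFv : ffa ((2*m : ℕ) : ℂ) v ≠ 0 := by
    rw [ffa_natCast _ _ hv]
    exact mul_ne_zero (Nat.cast_ne_zero.mpr (Nat.choose_pos hv).ne')
      (Nat.cast_ne_zero.mpr v.factorial_ne_zero)
  rw [div_eq_iff (mul_ne_zero hFu hFv),
    show (u + v) * (i + j) = u*(i+j) + v*(i+j) from by ring, pow_add]
  ring


set_option maxHeartbeats 1000000 in
/-- symmetrization of hypergeometric polynomials from a product identity
`F(x)·F(-x) = F'(c x²)` of generalized hypergeometric series. -/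
theorem stmt10 (m : ℕ) (hm : 1 ≤ m) {i j i' j' : ℕ}
    (a : Fin i → ℝ) (b : Fin j → ℝ) (a' : Fin i' → ℝ) (b' : Fin j' → ℝ)
    (c : ℝ) (hc : c ≠ 0)
    (ha : ∀ s, ∀ k : ℕ, (2 * (m : ℝ)) * a s ≠ k)
    (ha' : ∀ s, ∀ k : ℕ, (m : ℝ) * a' s ≠ k)
    (hF : hgSub (fun t => -(2 * (m : ℝ)) * b t) (fun s => -(2 * (m : ℝ)) * a s) 1 1 *
            hgSub (fun t => -(2 * (m : ℝ)) * b t) (fun s => -(2 * (m : ℝ)) * a s) (-1) 1 =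
          hgSub (fun t => -(m : ℝ) * b' t) (fun s => -(m : ℝ) * a' s) c 2)
    (s : ℂ) (hs : s ^ 2 = 4 * (c : ℂ) * (-1) ^ (i' + j' + 1)) :
    sym (2 * m) (hyp (2 * m) b a) =
      dil (2 * m) s (hypE m (Fin.append b' ![1 - 1 / (2 * (m : ℝ))]) a') := by
  unfold sym boxplus
  conv_rhs => rw [dil_eq_ofE]
  refine ofE_congr ?_
  intro k hk
  -- extract the coefficient identity from hF
  have hco' : (∑ x ∈ Finset.HasAntidiagonal.antidiagonal k,
      ((∏ t, rfa (((-(2 * (m:ℝ)) * b t : ℝ) : ℂ)) x.1) /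
          ((∏ s', rfa (((-(2 * (m:ℝ)) * a s' : ℝ) : ℂ)) x.1) * (x.1.factorial : ℂ))) *
        (((∏ t, rfa (((-(2 * (m:ℝ)) * b t : ℝ) : ℂ)) x.2) /
            ((∏ s', rfa (((-(2 * (m:ℝ)) * a s' : ℝ) : ℂ)) x.2) * (x.2.factorial : ℂ))) *
          (-1) ^ x.2)) =
      if 2 ∣ k then
        ((∏ t, rfa (((-(m:ℝ) * b' t : ℝ) : ℂ)) (k / 2)) /
            ((∏ s', rfa (((-(m:ℝ) * a' s' : ℝ) : ℂ)) (k / 2)) * ((k / 2).factorial : ℂ))) *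
          (c : ℂ) ^ (k / 2)
      else 0 := by
    have hco := congrArg (PowerSeries.coeff k) hF
    rw [PowerSeries.coeff_mul] at hco
    simpa only [hgSub, PowerSeries.coeff_mk, Nat.div_one, one_dvd, if_true,
      Complex.ofReal_one, one_pow, mul_one, Complex.ofReal_neg] using hco
  -- rewrite the sum of eC-terms
  have hsum : (∑ x ∈ Finset.HasAntidiagonal.antidiagonal k,
      eC (2*m) x.1 (hyp (2*m) b a) * eC (2*m) x.2 (dil (2*m) (-1) (hyp (2*m) b a)) /
        (ffa ((2*m : ℕ) : ℂ) x.1 * ffa ((2*m : ℕ) : ℂ) x.2)) =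
      (-1) ^ (k * (i + j)) * ∑ x ∈ Finset.HasAntidiagonal.antidiagonal k,
        ((∏ t, rfa (((-(2 * (m:ℝ)) * b t : ℝ) : ℂ)) x.1) /
            ((∏ s', rfa (((-(2 * (m:ℝ)) * a s' : ℝ) : ℂ)) x.1) * (x.1.factorial : ℂ))) *
          (((∏ t, rfa (((-(2 * (m:ℝ)) * b t : ℝ) : ℂ)) x.2) /
              ((∏ s', rfa (((-(2 * (m:ℝ)) * a s' : ℝ) : ℂ)) x.2) * (x.2.factorial : ℂ))) *
            (-1) ^ x.2) := by
    rw [Finset.mul_sum]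
    refine Finset.sum_congr rfl ?_
    intro x hx
    have hxs := Finset.HasAntidiagonal.mem_antidiagonal.mp hx
    have hu : x.1 ≤ 2*m := by omega
    have hv : x.2 ≤ 2*m := by omega
    rw [term_eq m a b ha hu hv, hxs]
  rw [hsum, hco']
  rcases Nat.even_or_odd k with hke | hko
  · -- even case
    obtain ⟨r, rfl⟩ : ∃ r, k = 2*r := by obtain ⟨t, ht⟩ := hke; exact ⟨t, by omega⟩
    have hrm : r ≤ m := by omega
    rw [if_pos ⟨r, rfl⟩, show 2*r/2 = r from by omega]
    -- right side: eC of hypE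
    unfold hypE hyp
    rw [eC_comp_sq_even m r _ hrm]
    beta_reduce
    -- split the appended product
    have harg : ((m : ℕ) : ℂ) * (((1 - 1/(2*(m:ℝ)) : ℝ)) : ℂ) = ((m : ℕ) : ℂ) - 1/2 := by
      have hm0 : ((m:ℕ):ℂ) ≠ 0 := Nat.cast_ne_zero.mpr (by omega)
      push_cast
      field_simp
    have hsplit : (∏ t : Fin (j'+1),
        ffa (((m : ℕ) : ℂ) * (((Fin.append b' ![1 - 1/(2*(m:ℝ))]) t : ℝ) : ℂ)) r) =
        (∏ t, ffa (((m : ℕ) : ℂ) * (b' t : ℂ)) r) * ffa (((m : ℕ) : ℂ) - 1/2) r := by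
      rw [Fin.prod_univ_add (fun x : Fin (j' + 1) =>
        ffa (((m : ℕ) : ℂ) * (((Fin.append b' ![1 - 1/(2*(m:ℝ))]) x : ℝ) : ℂ)) r)]
      simp only [Fin.append_left, Fin.append_right, Fin.prod_univ_one,
        Matrix.cons_val_zero, harg]
    rw [hsplit]
    -- left side: cast and sign normalization
    have hcb' : ∀ t, (((-(m:ℝ) * b' t : ℝ) : ℂ)) = -(((m : ℕ) : ℂ) * (b' t : ℂ)) := by
      intro t; push_cast; ring
    have hca' : ∀ t, (((-(m:ℝ) * a' t : ℝ) : ℂ)) = -(((m : ℕ) : ℂ) * (a' t : ℂ)) := by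
      intro t; push_cast; ring
    simp only [hcb', hca']
    rw [prod_rfa_neg (fun t => ((m : ℕ) : ℂ) * (b' t : ℂ)) r,
      prod_rfa_neg (fun t => ((m : ℕ) : ℂ) * (a' t : ℂ)) r,
      Fintype.card_fin, Fintype.card_fin]
    have hQa : (∏ s', ffa (((m : ℕ) : ℂ) * (a' s' : ℂ)) r) ≠ 0 := by
      rw [Finset.prod_ne_zero_iff]
      intro s' _
      apply ffa_ne_zero
      intro nn hnn
      apply ha' s' nn
      have : (((m:ℝ) * a' s' : ℝ) : ℂ) = ((nn : ℝ) : ℂ) := by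
        push_cast at hnn ⊢; linear_combination hnn
      exact_mod_cast this
    have hfac : (r.factorial : ℂ) ≠ 0 := Nat.cast_ne_zero.mpr r.factorial_ne_zero
    have hch : ((2*m : ℕ) : ℂ) = 2 * ((m : ℕ) : ℂ) := by push_cast; ring
    have hsign1 : ((-1:ℂ)) ^ (2*r*(i+j)) = 1 := by
      rw [show 2*r*(i+j) = 2*(r*(i+j)) from by ring, pow_mul]
      norm_num
    have hspow : s ^ (2*r) = 4^r * (c:ℂ)^r * (((-1:ℂ))^(r*i') * (((-1:ℂ))^(r*j') * (-1:ℂ)^r)) := by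
      rw [pow_mul, hs, mul_pow, mul_pow, ← pow_mul,
        show (i'+j'+1)*r = r*i' + (r*j' + r) from by ring, pow_add, pow_add]
    rw [hch, ffa_two_mul, ffa_natCast m r hrm, hsign1, hspow]
    clear hco' hsum hF hsplit hcb' hca' hke hk ha ha' hs hsign1 hspow harg hch
    rcases Nat.even_or_odd (r*i') with h1|h1 <;> rcases Nat.even_or_odd (r*j') with h2|h2 <;>
      rcases Nat.even_or_odd r with h3|h3 <;>
      simp only [h1.neg_one_pow, h2.neg_one_pow, h3.neg_one_pow] <;>
      (field_simp; try ring)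
  · -- odd case
    obtain ⟨t, rfl⟩ := hko
    rw [if_neg (by omega)]
    unfold hypE hyp
    rw [eC_comp_sq_odd m (2*t+1) _ ⟨t, rfl⟩ hk]
    simp

end FFP
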